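/- Let A ∈ ℝ^{N×N} be Hurwitz, B ∈ ℝ^{N×M}, C ∈ ℝ^{M×N}, and let c_1,…,c_K and d_1,…,d_L be nonzero real numbers. For each k, m let x^{km}(t) = exp(tA)·(c_k·B·e_m) ∈ ℝ^N be the state impulse response to the input u^{km}(t) = c_k e_m δ(t), and for each l, j let y^{lj}(t) = C·exp(tA)·(d_l·e_j) ∈ ℝ^M be the output response to the initial state x_0^{lj} = d_l e_j with zero input (here e_m, e_j are standard basis vectors; since A is Hurwitz the temporal averages of these trajectories are zero). Define Ψ^{klm}_{ij}(t) = x^{km}_i(t) · y^{lj}_m(t). Then for every pair (k, l), the matrix (1/(c_k d_l)) · Σ_{m=1}^{M} ∫₀^∞ Ψ^{klm}(t) dt equals the cross Gramian W_X = ∫₀^∞ exp(tA) B C exp(tA) dt; consequently the empirical cross Gramian, the average (1/(K·L)) Σ_{k=1}^K Σ_{l=1}^L of these matrices, equals W_X. -/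

import Mathlib

/-!
An eigenvector of `A` inside an eigenspace of `exp A` shows `σ(exp A) ⊆ exp σ(A)`, so for a
Hurwitz matrix the spectral radius of `exp A` is `< 1`. By Gelfand's formula some power
`exp (k A)` is then a contraction, and the semigroup property turns this into exponential decay
of `exp (t A)`. Hence every integrand is integrable, the sum over `m` can be moved inside the
integral, and the outer-product expansion `∑ₘ (B eₘ)(eₘᵀ C) = B C` produces the cross Gramian;
the scales `c k * d l` factor out of the integrand and cancel.
-/

open MeasureTheory Matrix NormedSpace

attribute [local instance] Matrix.normedAddCommGroup Matrix.normedSpace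

/-- `A` is Hurwitz: every complex eigenvalue of `A` has strictly negative real part. -/
def IsHurwitz {N : ℕ} (A : Matrix (Fin N) (Fin N) ℝ) : Prop :=
  ∀ μ ∈ spectrum ℂ (A.map Complex.ofReal), μ.re < 0

theorem Real.pow_floor_add_one_le_rpow {q : ℝ} (hq0 : 0 < q) (hq1 : q ≤ 1) (x : ℝ) :
    q ^ (⌊x⌋₊ + 1) ≤ q ^ x := by
  rw [← Real.rpow_natCast]
  exact Real.rpow_le_rpow_of_exponent_ge hq0 hq1 (by push_cast; exact (Nat.lt_floor_add_one x).le)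

section BanachAlgebra

variable {𝔸 : Type*} [NormedRing 𝔸] [CompleteSpace 𝔸]

theorem exists_norm_pow_lt_one_of_spectralRadius_lt_one [NormedAlgebra ℂ 𝔸] {a : 𝔸}
    (ha : spectralRadius ℂ a < 1) : ∃ k : ℕ, 0 < k ∧ ‖a ^ k‖ < 1 := by
  obtain ⟨k, hk, hk0⟩ := ((spectrum.pow_nnnorm_pow_one_div_tendsto_nhds_spectralRadius a).eventually
    (gt_mem_nhds ha) |>.and (Filter.eventually_gt_atTop 0)).exists
  refine ⟨k, hk0, ?_⟩
  have : (‖a ^ k‖₊ : ENNReal) < 1 := by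
    by_contra! h
    exact hk.not_ge (ENNReal.one_le_rpow h (by positivity))
  exact_mod_cast this

theorem norm_exp_smul_le_mul_pow_floor [NormedAlgebra ℝ 𝔸] {a : 𝔸} {T M : ℝ} (hT : 0 < T)
    (hM : ∀ s ∈ Set.Icc 0 T, ‖exp (s • a)‖ ≤ M) {t : ℝ} (ht : 0 ≤ t) :
    ‖exp (t • a)‖ ≤ M * ‖exp (T • a)‖ ^ ⌊t / T⌋₊ := by
  let : NormedAlgebra ℚ 𝔸 := NormedAlgebra.restrictScalars ℚ ℝ 𝔸
  set k := ⌊t / T⌋₊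
  have hs : t - k * T ∈ Set.Icc 0 T := by
    have h1 := Nat.floor_le (div_nonneg ht hT.le)
    have h2 := Nat.lt_floor_add_one (t / T)
    rw [le_div_iff₀ hT] at h1
    rw [div_lt_iff₀ hT] at h2
    constructor <;> nlinarith
  have hsplit : exp (t • a) = exp ((t - k * T) • a) * exp (T • a) ^ k := by
    rw [← NormedSpace.exp_nsmul, ← Nat.cast_smul_eq_nsmul ℝ, smul_smul,
      ← NormedSpace.exp_add_of_commute (((Commute.refl a).smul_left _).smul_right _), ← add_smul,
      sub_add_cancel]
  rw [hsplit]
  rcases Nat.eq_zero_or_pos k with hk | hk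
  · simpa [hk] using hM _ hs
  · have hM0 : 0 ≤ M := (norm_nonneg _).trans (hM _ hs)
    exact (norm_mul_le _ _).trans (mul_le_mul (hM _ hs) (norm_pow_le' _ hk) (norm_nonneg _) hM0)

theorem exists_norm_exp_smul_le_of_norm_exp_smul_lt_one [NormedAlgebra ℝ 𝔸] {a : 𝔸} {T : ℝ}
    (hT : 0 < T) (ha : ‖exp (T • a)‖ < 1) :
    ∃ K ε : ℝ, 0 ≤ K ∧ 0 < ε ∧ ∀ t : ℝ, 0 ≤ t → ‖exp (t • a)‖ ≤ K * Real.exp (-ε * t) := by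
  let : NormedAlgebra ℚ 𝔸 := NormedAlgebra.restrictScalars ℚ ℝ 𝔸
  obtain ⟨q, hq0, hq1, hθq⟩ : ∃ q : ℝ, 0 < q ∧ q < 1 ∧ ‖exp (T • a)‖ ≤ q :=
    ⟨(1 + ‖exp (T • a)‖) / 2, by positivity, by linarith, by linarith⟩
  obtain ⟨M, hM⟩ := (isCompact_Icc (a := 0) (b := T)).exists_bound_of_continuousOn
    (f := fun s : ℝ => exp (s • a))
    (exp_continuous.comp (continuous_id.smul continuous_const)).continuousOn
  have hM0 : 0 ≤ M := (norm_nonneg _).trans (hM 0 ⟨le_rfl, hT.le⟩)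
  refine ⟨M / q, -Real.log q / T, by positivity,
    div_pos (neg_pos.2 (Real.log_neg hq0 hq1)) hT, fun t ht => ?_⟩
  calc ‖exp (t • a)‖ ≤ M * ‖exp (T • a)‖ ^ ⌊t / T⌋₊ := norm_exp_smul_le_mul_pow_floor hT hM ht
    _ ≤ M * q ^ ⌊t / T⌋₊ := by gcongr
    _ = M / q * q ^ (⌊t / T⌋₊ + 1) := by field_simp; ring
    _ ≤ M / q * q ^ (t / T) := by gcongr; exact Real.pow_floor_add_one_le_rpow hq0 hq1.le _
    _ = M / q * Real.exp (-(-Real.log q / T) * t) := by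
      rw [Real.rpow_def_of_pos hq0]; ring_nf

end BanachAlgebra

namespace Matrix

theorem norm_mul_le_card_mul_norm_mul_norm {l m n α : Type*} [Fintype l] [Fintype m]
    [Fintype n] [NonUnitalNormedRing α] (X : Matrix l m α) (Y : Matrix m n α) :
    ‖X * Y‖ ≤ Fintype.card m * ‖X‖ * ‖Y‖ := by
  refine (Matrix.norm_le_iff (by positivity)).2 fun i j => ?_
  calc ‖(X * Y) i j‖ ≤ ∑ k, ‖X i k‖ * ‖Y k j‖ := by
        rw [Matrix.mul_apply]
        exact (norm_sum_le _ _).trans (Finset.sum_le_sum fun k _ => norm_mul_le _ _)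
    _ ≤ ∑ _k : m, ‖X‖ * ‖Y‖ := by
        gcongr with k <;> exact Matrix.norm_entry_le_entrywise_sup_norm _
    _ = Fintype.card m * ‖X‖ * ‖Y‖ := by simp [mul_assoc]

theorem sum_vecMulVec_col_row {R n p : Type*} [NonUnitalNonAssocSemiring R] [Fintype p]
    (B : Matrix n p R) (C : Matrix p n R) : ∑ m, vecMulVec (B.col m) (C.row m) = B * C := by
  ext i j
  simp [Matrix.sum_apply, vecMulVec_apply, Matrix.mul_apply]

variable {n : Type*} [Fintype n] [DecidableEq n]

theorem pow_mulVec_of_mulVec_eq_smul {R : Type*} [CommSemiring R] {A : Matrix n n R} {v : n → R}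
    {μ : R} (hv : A *ᵥ v = μ • v) (k : ℕ) : (A ^ k) *ᵥ v = μ ^ k • v := by
  induction k with
  | zero => simp
  | succ k ih => rw [pow_succ, ← mulVec_mulVec, hv, mulVec_smul, ih, smul_smul, pow_succ']

section LinftyOpNorm

/- Gelfand's formula needs a submultiplicative norm, so in this section square matrices carry
the `ℓ∞` operator norm instead of the entrywise sup norm. -/
attribute [-instance] Matrix.normedAddCommGroup Matrix.normedSpace
attribute [local instance] Matrix.linftyOpNormedRing Matrix.linftyOpNormedAlgebra

theorem exp_mulVec_of_mulVec_eq_smul {A : Matrix n n ℂ} {v : n → ℂ} {μ : ℂ}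
    (hv : A *ᵥ v = μ • v) : exp A *ᵥ v = Complex.exp μ • v := by
  have hA := (exp_series_hasSum_exp' (𝕂 := ℂ) A).map (mulVec.addMonoidHomLeft v)
    (continuous_id.matrix_mulVec continuous_const)
  have hμ := (exp_series_hasSum_exp' (𝕂 := ℂ) μ).smul_const v
  rw [← Complex.exp_eq_exp_ℂ] at hμ
  refine hA.unique (hμ.congr_fun fun k => ?_)
  simp [mulVec.addMonoidHomLeft, smul_mulVec, pow_mulVec_of_mulVec_eq_smul hv, smul_smul]

theorem spectrum_exp_subset (A : Matrix n n ℂ) :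
    spectrum ℂ (exp A) ⊆ Complex.exp '' spectrum ℂ A := by
  intro μ hμ
  rw [← spectrum_toLin', ← Module.End.hasEigenvalue_iff_mem_spectrum] at hμ
  have hcomm : Commute (toLin' (exp A)) (toLin' A) :=
    (Commute.exp_left (Commute.refl A)).map toLinAlgEquiv'
  have hmaps := Module.End.mapsTo_genEigenspace_of_comm hcomm μ 1
  have : Nontrivial (Module.End.eigenspace (toLin' (exp A)) μ) :=
    Submodule.nontrivial_iff_ne_bot.2 hμ
  obtain ⟨ν, hν⟩ := Module.End.exists_eigenvalue ((toLin' A).restrict hmaps)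
  obtain ⟨⟨v, hv_exp⟩, hv⟩ := hν.exists_hasEigenvector
  have hv0 : v ≠ 0 := fun h => hv.2 (Subtype.ext h)
  have hvA : A *ᵥ v = ν • v := congrArg Subtype.val hv.apply_eq_smul
  have hvexp : exp A *ᵥ v = μ • v := Module.End.mem_eigenspace_iff.1 hv_exp
  refine ⟨ν, ?_, smul_left_injective ℂ hv0 ?_⟩
  · rw [← spectrum_toLin', ← Module.End.hasEigenvalue_iff_mem_spectrum]
    exact Module.End.hasEigenvalue_of_hasEigenvector ⟨Module.End.mem_eigenspace_iff.2 hvA, hv0⟩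
  · simp only [← hvexp, exp_mulVec_of_mulVec_eq_smul hvA]

theorem spectralRadius_exp_lt_one {A : Matrix n n ℂ} (hA : ∀ μ ∈ spectrum ℂ A, μ.re < 0) :
    spectralRadius ℂ (exp A) < 1 := by
  have hfin := Matrix.finite_spectrum (exp A)
  rw [spectralRadius, ← hfin.coe_toFinset]
  simp_rw [Finset.mem_coe, ← Finset.sup_eq_iSup]
  rw [Finset.sup_lt_iff (by simp)]
  intro k hk
  obtain ⟨μ, hμ, rfl⟩ := spectrum_exp_subset A (hfin.mem_toFinset.1 hk)
  rw [ENNReal.coe_lt_one_iff, ← NNReal.coe_lt_one, coe_nnnorm, Complex.norm_exp]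
  exact Real.exp_lt_one_iff.2 (hA μ hμ)

theorem norm_entry_le_linfty_opNorm (X : Matrix n n ℂ) (i j : n) : ‖X i j‖ ≤ ‖X‖ := by
  rw [linfty_opNorm_def, ← coe_nnnorm, NNReal.coe_le_coe]
  calc ‖X i j‖₊ ≤ ∑ k, ‖X i k‖₊ :=
      Finset.single_le_sum (f := fun k => ‖X i k‖₊) (fun _ _ => zero_le) (Finset.mem_univ j)
    _ ≤ _ := Finset.le_sup (f := fun i => ∑ k, ‖X i k‖₊) (Finset.mem_univ i)

theorem exists_norm_exp_smul_apply_le {A : Matrix n n ℂ} (hA : ∀ μ ∈ spectrum ℂ A, μ.re < 0) :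
    ∃ K ε : ℝ, 0 ≤ K ∧ 0 < ε ∧ ∀ t : ℝ, 0 ≤ t → ∀ i j,
      ‖exp (t • A) i j‖ ≤ K * Real.exp (-ε * t) := by
  obtain ⟨k, hk, hlt⟩ := exists_norm_pow_lt_one_of_spectralRadius_lt_one (𝔸 := Matrix n n ℂ)
    (a := exp A) (spectralRadius_exp_lt_one hA)
  have hkA : ‖exp ((k : ℝ) • A)‖ < 1 := by
    rw [Nat.cast_smul_eq_nsmul ℝ, Matrix.exp_nsmul]
    exact hlt
  obtain ⟨K, ε, hK, hε, hdecay⟩ := exists_norm_exp_smul_le_of_norm_exp_smul_lt_one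
    (Nat.cast_pos.2 hk) hkA
  exact ⟨K, ε, hK, hε, fun t ht i j => (norm_entry_le_linfty_opNorm _ i j).trans (hdecay t ht)⟩

theorem map_ofReal_exp (A : Matrix n n ℝ) :
    (exp A).map Complex.ofReal = exp (A.map Complex.ofReal) := by
  have hc : Continuous (Complex.ofRealHom.mapMatrix : Matrix n n ℝ →+* Matrix n n ℂ) :=
    continuous_matrix fun i j =>
      Complex.continuous_ofReal.comp ((continuous_apply j).comp (continuous_apply i))
  exact map_exp _ hc A

theorem continuous_exp_smul (A : Matrix n n ℝ) : Continuous fun t : ℝ => exp (t • A) :=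
  exp_continuous.comp (continuous_id.smul continuous_const)

end LinftyOpNorm

theorem of_mulVec_smul_mul_mulVec_smul {R p : Type*} [CommSemiring R] [Fintype p] [DecidableEq p]
    (X Y : Matrix n n R) (B : Matrix n p R) (C : Matrix p n R) (a b : R) (m : p) :
    Matrix.of (fun i j => (X *ᵥ (a • (B *ᵥ Pi.single m 1))) i * (C *ᵥ (Y *ᵥ (b • Pi.single j 1))) m)
      = (a * b) • (X * vecMulVec (B.col m) (C.row m) * Y) := by
  ext i j
  simp only [mul_vecMulVec, vecMulVec_mul, mulVec_smul, mulVec_single_one, of_apply, smul_apply,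
    vecMulVec_apply, Pi.smul_apply, smul_eq_mul]
  have hCY : (C *ᵥ Y.col j) m = (C.row m ᵥ* Y) j := rfl
  rw [hCY]
  ring

end Matrix

namespace IsHurwitz

variable {N : ℕ} {A : Matrix (Fin N) (Fin N) ℝ}

theorem exists_norm_exp_smul_le (hA : IsHurwitz A) :
    ∃ K ε : ℝ, 0 ≤ K ∧ 0 < ε ∧ ∀ t : ℝ, 0 ≤ t → ‖exp (t • A)‖ ≤ K * Real.exp (-ε * t) := by
  obtain ⟨K, ε, hK, hε, h⟩ := Matrix.exists_norm_exp_smul_apply_le hA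
  refine ⟨K, ε, hK, hε, fun t ht => (Matrix.norm_le_iff (by positivity)).2 fun i j => ?_⟩
  have hsmul : (t • A).map Complex.ofReal = t • A.map Complex.ofReal := by
    ext; simp
  simpa [← hsmul, ← Matrix.map_ofReal_exp] using h t ht i j

theorem exists_norm_exp_smul_mul_mul_exp_smul_le (hA : IsHurwitz A)
    (D : Matrix (Fin N) (Fin N) ℝ) : ∃ K ε : ℝ, 0 < ε ∧ ∀ t : ℝ, 0 ≤ t →
      ‖exp (t • A) * D * exp (t • A)‖ ≤ K * Real.exp (-ε * t) := by
  obtain ⟨K, ε, hK, hε, h⟩ := hA.exists_norm_exp_smul_le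
  refine ⟨N * (N * ‖D‖) * K ^ 2, 2 * ε, by positivity, fun t ht => ?_⟩
  have hX := h t ht
  calc ‖exp (t • A) * D * exp (t • A)‖
      ≤ N * (N * ‖exp (t • A)‖ * ‖D‖) * ‖exp (t • A)‖ := by
        refine (Matrix.norm_mul_le_card_mul_norm_mul_norm _ _).trans ?_
        simp only [Fintype.card_fin]
        gcongr
        simpa using Matrix.norm_mul_le_card_mul_norm_mul_norm (exp (t • A)) D
    _ ≤ N * (N * (K * Real.exp (-ε * t)) * ‖D‖) * (K * Real.exp (-ε * t)) := by gcongr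
    _ = N * (N * ‖D‖) * K ^ 2 * Real.exp (-(2 * ε) * t) := by
        rw [show -(2 * ε) * t = -ε * t + -ε * t by ring, Real.exp_add]; ring

theorem integral_exp_smul_mul_sum_mul_exp_smul (hA : IsHurwitz A) {ι : Type*} (s : Finset ι)
    (D : ι → Matrix (Fin N) (Fin N) ℝ) :
    ∫ t in Set.Ioi (0 : ℝ), exp (t • A) * (∑ i ∈ s, D i) * exp (t • A)
      = ∑ i ∈ s, ∫ t in Set.Ioi (0 : ℝ), exp (t • A) * D i * exp (t • A) := by
  /- Instance search does not identify the product topology on matrices with the topology of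
  the entrywise sup norm, so the instances `Integrable` needs are supplied by hand. -/
  let _ : ContinuousENorm (Matrix (Fin N) (Fin N) ℝ) := SeminormedAddGroup.toContinuousENorm
  have _ : TopologicalSpace.PseudoMetrizableSpace (Matrix (Fin N) (Fin N) ℝ) :=
    TopologicalSpace.pseudoMetrizableSpace_pi
  have hint : ∀ i ∈ s,
      IntegrableOn (fun t : ℝ => exp (t • A) * D i * exp (t • A)) (Set.Ioi 0) := by
    intro i _
    obtain ⟨K, ε, hε, hbound⟩ := hA.exists_norm_exp_smul_mul_mul_exp_smul_le (D i)
    have hcont : Continuous fun t : ℝ => exp (t • A) * D i * exp (t • A) :=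
      ((Matrix.continuous_exp_smul A).mul continuous_const).mul (Matrix.continuous_exp_smul A)
    refine Integrable.mono' ((exp_neg_integrableOn_Ioi 0 hε).const_mul K)
      hcont.aestronglyMeasurable ?_
    filter_upwards [ae_restrict_mem measurableSet_Ioi] with t ht using hbound t ht.le
  rw [← integral_finsetSum _ hint]
  simp only [Finset.mul_sum, Finset.sum_mul]

theorem inv_smul_sum_integral_eq_crossGramian {M : ℕ} (hA : IsHurwitz A)
    (B : Matrix (Fin N) (Fin M) ℝ) (C : Matrix (Fin M) (Fin N) ℝ) {a b : ℝ} (ha : a ≠ 0)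
    (hb : b ≠ 0) :
    (a * b)⁻¹ • ∑ m : Fin M, ∫ t in Set.Ioi (0 : ℝ), Matrix.of (fun i j : Fin N =>
        (exp (t • A) *ᵥ (a • (B *ᵥ (Pi.single m 1 : Fin M → ℝ)))) i *
          (C *ᵥ (exp (t • A) *ᵥ (b • (Pi.single j 1 : Fin N → ℝ)))) m) =
      ∫ t in Set.Ioi (0 : ℝ), exp (t • A) * B * C * exp (t • A) := by
  simp_rw [Matrix.of_mulVec_smul_mul_mulVec_smul, integral_smul, ← Finset.smul_sum, smul_smul,
    inv_mul_cancel₀ (mul_ne_zero ha hb), one_smul, ← hA.integral_exp_smul_mul_sum_mul_exp_smul,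
    Matrix.sum_vecMulVec_col_row, Matrix.mul_assoc]

end IsHurwitz

/-- For a linear system the empirical cross Gramian equals the cross Gramian:
for each pair of perturbation scales `(c k, d l)` the matrix
`(c k * d l)⁻¹ Σₘ ∫₀^∞ Ψ^{klm}(t) dt`, built from the state impulse responses
`x^{km}(t) = exp(tA) (c k • B eₘ)` and the output responses
`y^{lj}(t) = C exp(tA) (d l • eⱼ)` via `Ψ^{klm}_{ij}(t) = x^{km}_i(t) ⬝ y^{lj}_m(t)`,
equals `W_X = ∫₀^∞ exp(tA) B C exp(tA) dt`; consequently so does their average,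
the empirical cross Gramian. -/
theorem empirical_crossGramian_eq_crossGramian {N M K L : ℕ}
    (hK : 0 < K) (hL : 0 < L)
    (A : Matrix (Fin N) (Fin N) ℝ) (B : Matrix (Fin N) (Fin M) ℝ)
    (C : Matrix (Fin M) (Fin N) ℝ) (hA : IsHurwitz A)
    (c : Fin K → ℝ) (d : Fin L → ℝ)
    (hc : ∀ k, c k ≠ 0) (hd : ∀ l, d l ≠ 0) :
    (∀ (k : Fin K) (l : Fin L),
        (c k * d l)⁻¹ •
            ∑ m : Fin M, ∫ t in Set.Ioi (0 : ℝ), Matrix.of (fun i j : Fin N =>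
              (NormedSpace.exp (t • A) *ᵥ (c k • (B *ᵥ (Pi.single m 1 : Fin M → ℝ)))) i *
                (C *ᵥ (NormedSpace.exp (t • A) *ᵥ (d l • (Pi.single j 1 : Fin N → ℝ)))) m) =
          ∫ t in Set.Ioi (0 : ℝ), NormedSpace.exp (t • A) * B * C * NormedSpace.exp (t • A)) ∧
      ((K * L : ℝ)⁻¹ •
          ∑ k : Fin K, ∑ l : Fin L, (c k * d l)⁻¹ •
            ∑ m : Fin M, ∫ t in Set.Ioi (0 : ℝ), Matrix.of (fun i j : Fin N =>
              (NormedSpace.exp (t • A) *ᵥ (c k • (B *ᵥ (Pi.single m 1 : Fin M → ℝ)))) i *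
                (C *ᵥ (NormedSpace.exp (t • A) *ᵥ (d l • (Pi.single j 1 : Fin N → ℝ)))) m)) =
        ∫ t in Set.Ioi (0 : ℝ), NormedSpace.exp (t • A) * B * C * NormedSpace.exp (t • A) := by
  have hterm := fun k l => hA.inv_smul_sum_integral_eq_crossGramian B C (hc k) (hd l)
  refine ⟨hterm, ?_⟩
  simp only [hterm, Finset.sum_const, Finset.card_univ, Fintype.card_fin, ← Nat.cast_smul_eq_nsmul ℝ,
    smul_smul]
  rw [inv_mul_cancel₀ (by positivity), one_smul]
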